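/- Pythagorean lemma: let α ∈ ℝ^k and x = X p^{Xᵀα}. Then for every positive probability vector ν with Xν = x, S(ν|p) − φ(x|p) = S(ν | p^{Xᵀα}). -/

import Mathlib

open Real

/-- `p` is a positive probability vector on `{1,…,n}`. -/
def IsPPV {n : ℕ} (p : Fin n → ℝ) : Prop := (∀ i, 0 < p i) ∧ (∑ i, p i) = 1

/-- Relative entropy (KL divergence) `S(ν|q) = ∑ i, ν i · log (ν i / q i)`. -/
noncomputable def relEnt {n : ℕ} (ν q : Fin n → ℝ) : ℝ := ∑ i, ν i * Real.log (ν i / q i)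

/-- Free energy `F(μ|p) = log (∑ i, p i · exp (μ i))`. -/
noncomputable def freeEnergy {n : ℕ} (p μ : Fin n → ℝ) : ℝ :=
  Real.log (∑ i, p i * Real.exp (μ i))

/-- Exponentially tilted measure `(p^μ)_i = p i · exp (μ i − F(μ|p))`. -/
noncomputable def tilted {n : ℕ} (p μ : Fin n → ℝ) : Fin n → ℝ :=
  fun i => p i * Real.exp (μ i - freeEnergy p μ)

/-- Contracted rate function `φ(x|p) = inf { S(ν|p) : ν a positive probability
vector with Xν = x }`. -/
noncomputable def phi {n k : ℕ} (X : Matrix (Fin k) (Fin n) ℝ) (p : Fin n → ℝ)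
    (x : Fin k → ℝ) : ℝ :=
  sInf { t : ℝ | ∃ ν : Fin n → ℝ, IsPPV ν ∧ X.mulVec ν = x ∧ t = relEnt ν p }

lemma tilted_isPPV {n : ℕ} (hn : 1 ≤ n) {p : Fin n → ℝ} (hp : IsPPV p) (μ : Fin n → ℝ) :
    IsPPV (tilted p μ) := by
  have hpos : ∀ i, 0 < tilted p μ i := fun i => by
    have := hp.1 i; unfold tilted; positivity
  refine ⟨hpos, ?_⟩
  have hspos : 0 < ∑ i, p i * Real.exp (μ i) := by
    apply Finset.sum_pos
    · intro i _; have := hp.1 i; positivity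
    · have : Nonempty (Fin n) := Fin.pos_iff_nonempty.mp hn
      exact Finset.univ_nonempty
  have hexp : Real.exp (freeEnergy p μ) = ∑ i, p i * Real.exp (μ i) :=
    Real.exp_log hspos
  calc ∑ i, tilted p μ i = (∑ i, p i * Real.exp (μ i)) / Real.exp (freeEnergy p μ) := by
        rw [Finset.sum_div]
        exact Finset.sum_congr rfl fun i _ => by
          unfold tilted; rw [Real.exp_sub]; ring
    _ = 1 := by rw [hexp]; exact div_self (ne_of_gt hspos)

lemma relEnt_nonneg {n : ℕ} {ν q : Fin n → ℝ} (hν : IsPPV ν) (hq : IsPPV q) :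
    0 ≤ relEnt ν q := by
  have key : ∀ i, ν i - q i ≤ ν i * Real.log (ν i / q i) := by
    intro i
    have hνi := hν.1 i; have hqi := hq.1 i
    have h := Real.log_le_sub_one_of_pos (show 0 < q i / ν i by positivity)
    have heq : Real.log (ν i / q i) = - Real.log (q i / ν i) := by
      rw [← Real.log_inv]; congr 1; field_simp
    rw [heq]
    have : q i / ν i * ν i = q i := by field_simp
    nlinarith
  calc (0:ℝ) = ∑ i, (ν i - q i) := by
        rw [Finset.sum_sub_distrib, hν.2, hq.2]; ring
    _ ≤ relEnt ν q := Finset.sum_le_sum (fun i _ => key i)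

-- identity: relEnt ν p = relEnt ν (tilted p μ) + ∑ ν i * μ i - freeEnergy p μ
lemma relEnt_tilted_identity {n : ℕ} {p ν : Fin n → ℝ} (hp : IsPPV p) (hν : IsPPV ν)
    (μ : Fin n → ℝ) :
    relEnt ν p = relEnt ν (tilted p μ) + (∑ i, ν i * μ i) - freeEnergy p μ := by
  have hpt : ∀ i, Real.log (ν i / p i)
      = Real.log (ν i / tilted p μ i) + (μ i - freeEnergy p μ) := by
    intro i
    have hpi := hp.1 i; have hνi := hν.1 i
    have hti : tilted p μ i = p i * Real.exp (μ i - freeEnergy p μ) := rfl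
    have htpos : 0 < tilted p μ i := by rw [hti]; positivity
    rw [show ν i / p i = (ν i / tilted p μ i) * Real.exp (μ i - freeEnergy p μ) by
      rw [hti]; field_simp]
    rw [Real.log_mul (by positivity) (by positivity), Real.log_exp]
  unfold relEnt
  rw [Finset.sum_congr rfl (fun i _ => by rw [hpt i])]
  have hF : ∑ i, ν i * freeEnergy p μ = freeEnergy p μ := by
    rw [← Finset.sum_mul, hν.2, one_mul]
  simp only [mul_add, mul_sub, Finset.sum_add_distrib, Finset.sum_sub_distrib, hF]
  ring

/-- Pythagorean lemma: for `x = X p^{Xᵀα}` and every positive probability vector `ν`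
with `Xν = x`, `S(ν|p) − φ(x|p) = S(ν | p^{Xᵀα})`. -/
theorem pythagorean_lemma
    {n k : ℕ} (hn : 1 ≤ n) (hk : 1 ≤ k)
    (p : Fin n → ℝ) (hp : IsPPV p) (X : Matrix (Fin k) (Fin n) ℝ) (α : Fin k → ℝ)
    (x : Fin k → ℝ) (hx : x = X.mulVec (tilted p (fun i => ∑ a, α a * X a i)))
    (ν : Fin n → ℝ) (hν : IsPPV ν) (hνx : X.mulVec ν = x) :
    relEnt ν p - phi X p x = relEnt ν (tilted p (fun i => ∑ a, α a * X a i)) := by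
  set μ : Fin n → ℝ := fun i => ∑ a, α a * X a i with hμ
  set t : Fin n → ℝ := tilted p μ with ht
  have htppv : IsPPV t := tilted_isPPV hn hp μ
  set c : ℝ := (∑ a, α a * x a) - freeEnergy p μ with hc
  have hsumμ : ∀ w : Fin n → ℝ, X.mulVec w = x → ∑ i, w i * μ i = ∑ a, α a * x a := by
    intro w hw
    simp only [hμ, Finset.mul_sum]
    rw [Finset.sum_comm]
    refine Finset.sum_congr rfl fun a _ => ?_
    have : x a = ∑ i, X a i * w i := by rw [← hw]; rfl
    rw [this, Finset.mul_sum]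
    exact Finset.sum_congr rfl fun i _ => by ring
  have hid : ∀ w : Fin n → ℝ, IsPPV w → X.mulVec w = x → relEnt w p = relEnt w t + c := by
    intro w hw hwx
    rw [relEnt_tilted_identity hp hw μ, hsumμ w hwx, hc]
    ring
  have htx : X.mulVec t = x := hx.symm
  have hrt0 : relEnt t t = 0 := by
    unfold relEnt
    refine Finset.sum_eq_zero fun i _ => ?_
    rw [div_self (ne_of_gt (htppv.1 i)), Real.log_one, mul_zero]
  have hrtp : relEnt t p = c := by
    have := hid t htppv htx
    rw [hrt0] at this; linarith
  have hlb : ∀ y ∈ { s : ℝ | ∃ w : Fin n → ℝ, IsPPV w ∧ X.mulVec w = x ∧ s = relEnt w p },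
      c ≤ y := by
    rintro y ⟨w, hw, hwx, rfl⟩
    rw [hid w hw hwx]
    linarith [relEnt_nonneg hw htppv]
  have hmem : c ∈ { s : ℝ | ∃ w : Fin n → ℝ, IsPPV w ∧ X.mulVec w = x ∧ s = relEnt w p } :=
    ⟨t, htppv, htx, hrtp.symm⟩
  have hphi : phi X p x = c := by
    unfold phi
    exact le_antisymm (csInf_le ⟨c, hlb⟩ hmem) (le_csInf ⟨c, hmem⟩ hlb)
  rw [hphi, hid ν hν hνx]
  ring
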